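/- Let X be a finite set, ℓ ≥ 1, and P an ℓ-th order Markov transition matrix on X whose Doob lift P^{(ℓ)} (a stochastic matrix on X^ℓ) has a single recurrent class; let π be an invariant distribution of P^{(ℓ)} on X^ℓ. For m ≥ ℓ define the joint distribution q_m on X^m by q_m(x_1,…,x_m) = π(x_1,…,x_ℓ) ∏_{j=ℓ+1}^{m} P((x_{j-ℓ},…,x_{j-1}), x_j). Let Y be a finite set with |Y| > 1 and g : X → Y any map. Fix k ≥ 1, set m = max(k+1, ℓ), and let r_{k+1} on Y^{k+1} be the pushforward under coordinatewise application of g of the first-(k+1)-coordinate marginal of q_m, with k-marginal r_k. Let Q be the k-th order Markov transition matrix on Y with Q(w,z) = r_{k+1}(w,z)/r_k(w) if r_k(w) > 0, and Q(w,z) = 1/|Y| otherwise. Then Q has a unique invariant distribution μ on Y^k. -/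

import Mathlib

/-!
The marginal `r_k` is invariant for `Q` because the path measure of a stationary chain is shift
invariant. Uniqueness follows once the Doob lift of `Q` has a single recurrent class, for then any
two invariant distributions agree (compare them through their minimal ratio). Words of positive
`r_k`-mass communicate: each is read off, through `g`, from a path of positive probability of the
`ℓ`-th order chain; the windows of such paths carry `π`-mass, so they lie in the recurrent class of
the lift of `P`, two such paths can be joined, and the image of the joined path moves through
positive transitions of `Q`. Every other word reaches them, since `Q` charges every letter after a
word of `r_k`-mass zero.
-/

open Finset
open scoped Classical

noncomputable section

/-- The first `k` coordinates of a length-`k+1` tuple. -/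
def front {Z : Type*} {k : ℕ} (v : Fin (k + 1) → Z) : Fin k → Z :=
  fun i => v i.castSucc

/-- The last `k` coordinates of a length-`k+1` tuple. -/
def back {Z : Type*} {k : ℕ} (v : Fin (k + 1) → Z) : Fin k → Z :=
  fun i => v i.succ

/-- `p` is a probability distribution on the finite type `α`. -/
def IsProbDist {α : Type*} [Fintype α] (p : α → ℝ) : Prop :=
  (∀ a, 0 ≤ p a) ∧ ∑ a, p a = 1

/-- `Q` is a `k`-th order Markov transition matrix on `Z`. -/
def IsTransMat {Z : Type*} [Fintype Z] {k : ℕ} (Q : (Fin k → Z) → Z → ℝ) : Prop :=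
  (∀ w z, 0 ≤ Q w z) ∧ ∀ w, ∑ z, Q w z = 1

/-- `μ` is an invariant (probability) distribution for the `k`-th order transition matrix `Q`:
`μ(z₁,…,z_k) = ∑_{z₀} μ(z₀,…,z_{k-1}) Q((z₀,…,z_{k-1}), z_k)`. -/
def IsInvariantFor {Z : Type*} [Fintype Z] {k : ℕ} (μ : (Fin k → Z) → ℝ)
    (Q : (Fin k → Z) → Z → ℝ) : Prop :=
  IsProbDist μ ∧
    ∀ w : Fin k → Z,
      μ w = ∑ z0 : Z,
        μ (front (Fin.cons z0 w)) *
          Q (front (Fin.cons z0 w)) ((Fin.cons z0 w : Fin (k + 1) → Z) (Fin.last k))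

/-- `P` is a (first-order) stochastic matrix. -/
def IsStochastic {S : Type*} [Fintype S] (P : Matrix S S ℝ) : Prop :=
  (∀ i j, 0 ≤ P i j) ∧ ∀ i, ∑ j, P i j = 1

/-- State `j` is accessible from state `i` under the stochastic matrix `P`. -/
def Accessible {S : Type*} [Fintype S] (P : Matrix S S ℝ) (i j : S) : Prop :=
  ∃ n : ℕ, 1 ≤ n ∧ 0 < (P ^ n) i j

/-- State `i` is recurrent for the stochastic matrix `P`. -/
def Recurrent {S : Type*} [Fintype S] (P : Matrix S S ℝ) (i : S) : Prop :=
  ∀ j, Accessible P i j → Accessible P j i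

/-- `P` has a single recurrent class. -/
def SingleRecurrentClass {S : Type*} [Fintype S] (P : Matrix S S ℝ) : Prop :=
  (∃ i, Recurrent P i) ∧ ∀ i j, Recurrent P i → Recurrent P j → Accessible P i j

/-- The Doob lift of a `k`-th order transition matrix `Q` on `Z` to a first-order
stochastic matrix on `Z^k`. -/
def doobLift {Z : Type*} {k : ℕ} (Q : (Fin k → Z) → Z → ℝ) (hk : 0 < k) :
    Matrix (Fin k → Z) (Fin k → Z) ℝ :=
  Matrix.of fun w w' =>
    if ∀ (i : Fin k) (h : (i : ℕ) + 1 < k), w' i = w ⟨(i : ℕ) + 1, h⟩ then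
      Q w (w' ⟨k - 1, Nat.sub_lt hk Nat.one_pos⟩)
    else 0

/-- The distribution of a length-`m` block of the process `g(X)`, where `X` is a
stationary Markov chain with transition matrix `P` and (initial) invariant
distribution `π`:
`p_m(y₁,…,y_m) = ∑_{x₁ ∈ g⁻¹(y₁),…,x_m ∈ g⁻¹(y_m)} π(x₁) ∏_{ℓ=2}^m P(x_{ℓ-1}, x_ℓ)`. -/
def wordDist {X Y : Type*} [Fintype X] (P : Matrix X X ℝ) (π : X → ℝ) (g : X → Y)
    {m : ℕ} (y : Fin m → Y) : ℝ :=
  ∑ x : Fin m → X,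
    if ∀ i, g (x i) = y i then
      ∏ i : Fin m,
        if (i : ℕ) = 0 then π (x i)
        else P (x ⟨(i : ℕ) - 1, lt_of_le_of_lt (Nat.sub_le _ _) i.isLt⟩) (x i)
    else 0

open scoped Matrix

theorem mul_pos_iff_of_nonneg {a b : ℝ} (ha : 0 ≤ a) (hb : 0 ≤ b) :
    0 < a * b ↔ 0 < a ∧ 0 < b :=
  ⟨fun h => ⟨pos_of_mul_pos_left h hb, pos_of_mul_pos_right h ha⟩, fun h => mul_pos h.1 h.2⟩

theorem exists_pos_of_sum_pos {ι : Type*} {s : Finset ι} {f : ι → ℝ} (h : 0 < ∑ i ∈ s, f i) :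
    ∃ i ∈ s, 0 < f i := by
  by_contra! hf
  exact h.not_ge (Finset.sum_nonpos hf)

section MarkovChain

variable {S : Type*} [Fintype S] {P : Matrix S S ℝ}

theorem accessible_iff_transGen (hP : ∀ i j, 0 ≤ P i j) {i j : S} :
    Accessible P i j ↔ Relation.TransGen (0 < P · ·) i j := by
  have pow_succ_pos : ∀ n (l : S), 0 < (P ^ (n + 1)) i l ↔ ∃ a, 0 < (P ^ n) i a ∧ 0 < P a l := by
    intro n l
    have hnonneg : ∀ a, 0 ≤ (P ^ n) i a := fun a => Matrix.pow_apply_nonneg hP n i a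
    rw [pow_succ, Matrix.mul_apply,
      Finset.sum_pos_iff_of_nonneg fun a _ => mul_nonneg (hnonneg a) (hP a l)]
    simp only [mem_univ, true_and, mul_pos_iff_of_nonneg (hnonneg _) (hP _ l)]
  constructor
  · rintro ⟨n, hn, h⟩
    induction n generalizing j with
    | zero => omega
    | succ n ih =>
      rcases Nat.eq_zero_or_pos n with rfl | hn
      · exact .single (by simpa using h)
      · obtain ⟨a, hia, haj⟩ := (pow_succ_pos n j).1 h
        exact .tail (ih hn hia) haj
  · intro h
    induction h with
    | single h => exact ⟨1, le_rfl, by simpa using h⟩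
    | tail _ hbc ih =>
      obtain ⟨n, hn, h⟩ := ih
      exact ⟨n + 1, by omega, (pow_succ_pos n _).2 ⟨_, h, hbc⟩⟩

theorem recurrent_iff (hP : ∀ i j, 0 ≤ P i j) {i : S} :
    Recurrent P i ↔
      ∀ j, Relation.TransGen (0 < P · ·) i j → Relation.TransGen (0 < P · ·) j i := by
  simp only [Recurrent, accessible_iff_transGen hP]

theorem exists_pos_of_sum_eq_one {μ : S → ℝ} (h : ∑ a, μ a = 1) : ∃ a, 0 < μ a := by
  obtain ⟨a, -, ha⟩ := exists_pos_of_sum_pos (h ▸ one_pos)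
  exact ⟨a, ha⟩

theorem IsStochastic.exists_pos (hP : IsStochastic P) (i : S) : ∃ j, 0 < P i j :=
  exists_pos_of_sum_eq_one (hP.2 i)

theorem Recurrent.transGen_of_reflTransGen (hP : IsStochastic P) {i j : S} (hi : Recurrent P i)
    (hij : Relation.ReflTransGen (0 < P · ·) i j) : Relation.TransGen (0 < P · ·) i j := by
  rcases Relation.reflTransGen_iff_eq_or_transGen.1 hij with h | h
  · obtain ⟨l, hl⟩ := hP.exists_pos i
    rw [h]
    exact .head hl ((recurrent_iff hP.1).1 hi l (.single hl))
  · exact h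

variable {μ : S → ℝ}

theorem pos_of_reflTransGen_of_vecMul_eq (hP : ∀ i j, 0 ≤ P i j) (hμ : ∀ a, 0 ≤ μ a)
    (hμP : μ ᵥ* P = μ) {i j : S} (hi : 0 < μ i) (hij : Relation.ReflTransGen (0 < P · ·) i j) :
    0 < μ j := by
  have step : ∀ a b, 0 < μ a → 0 < P a b → 0 < μ b := fun a b ha hab => by
    rw [← hμP]
    exact lt_of_lt_of_le (mul_pos ha hab) (Finset.single_le_sum
      (f := fun c => μ c * P c b) (fun c _ => mul_nonneg (hμ c) (hP c b)) (mem_univ a))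
  induction hij with
  | refl => exact hi
  | tail _ hbc ih => exact step _ _ ih hbc

/-- No stationary mass flows into a closed set of states. -/
theorem entry_eq_zero_of_closed (hP : IsStochastic P) (hμ : ∀ a, 0 ≤ μ a) (hμP : μ ᵥ* P = μ)
    {C : Finset S} (hC : ∀ a ∈ C, ∀ b, 0 < P a b → b ∈ C) {a b : S} (ha : a ∉ C) (hμa : 0 < μ a)
    (hb : b ∈ C) : P a b = 0 := by
  classical
  have hrow : ∀ c ∈ C, ∑ d ∈ C, P c d = 1 := fun c hc => by
    rw [← hP.2 c, ← Finset.sum_subset (subset_univ C)]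
    exact fun d _ hd => le_antisymm (not_lt.1 fun h => hd (hC c hc d h)) (hP.1 c d)
  have hflow : ∑ c ∈ univ.filter (· ∉ C), μ c * ∑ d ∈ C, P c d = 0 := by
    have hbalance : ∑ d ∈ C, μ d = ∑ c, μ c * ∑ d ∈ C, P c d := by
      simp_rw [Finset.mul_sum]
      rw [Finset.sum_comm]
      exact Finset.sum_congr rfl fun d _ => (congrFun hμP d).symm
    have hinside : ∑ c ∈ univ.filter (· ∈ C), μ c * ∑ d ∈ C, P c d = ∑ d ∈ C, μ d := by
      rw [Finset.filter_mem_eq_inter, univ_inter]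
      exact Finset.sum_congr rfl fun c hc => by rw [hrow c hc, mul_one]
    rw [← Finset.sum_filter_add_sum_filter_not univ (· ∈ C), hinside] at hbalance
    linarith
  have hterm := (Finset.sum_eq_zero_iff_of_nonneg fun c _ =>
    mul_nonneg (hμ c) (Finset.sum_nonneg fun d _ => hP.1 c d)).1 hflow a (by simpa using ha)
  have hsum := (mul_eq_zero.1 hterm).resolve_left hμa.ne'
  exact (Finset.sum_eq_zero_iff_of_nonneg fun d _ => hP.1 a d).1 hsum b hb

/-- If `t` reaches `j` without return, the states reached from `j` form a closed set avoiding `t`;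
a path from `t` into it would carry stationary mass into it. -/
theorem recurrent_of_pos (hP : IsStochastic P) (hμ : ∀ a, 0 ≤ μ a) (hμP : μ ᵥ* P = μ) {t : S}
    (ht : 0 < μ t) : Recurrent P t := by
  classical
  rw [recurrent_iff hP.1]
  intro j htj
  by_contra hjt
  set C := univ.filter (Relation.ReflTransGen (0 < P · ·) j)
  have hC : ∀ a ∈ C, ∀ b, 0 < P a b → b ∈ C := fun a ha b hab => by
    simp only [C, mem_filter, mem_univ, true_and] at ha ⊢
    exact ha.tail hab
  have htC : t ∉ C := by
    simp only [C, mem_filter, mem_univ, true_and, Relation.reflTransGen_iff_eq_or_transGen]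
    rintro (rfl | h)
    exacts [hjt htj, hjt h]
  have hout : ∀ b, Relation.TransGen (0 < P · ·) t b → b ∉ C := by
    intro b htb
    induction htb with
    | single h => exact fun hb => h.ne' (entry_eq_zero_of_closed hP hμ hμP hC htC ht hb)
    | tail hta hab ih =>
      exact fun hb => hab.ne' (entry_eq_zero_of_closed hP hμ hμP hC ih
        (pos_of_reflTransGen_of_vecMul_eq hP.1 hμ hμP ht hta.to_reflTransGen) hb)
  exact hout j htj (mem_filter.2 ⟨mem_univ j, .refl⟩)

theorem pos_of_recurrent (hP : IsStochastic P) (hsrc : SingleRecurrentClass P) (hμ : IsProbDist μ)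
    (hμP : μ ᵥ* P = μ) {x : S} (hx : Recurrent P x) : 0 < μ x := by
  obtain ⟨a, ha⟩ := exists_pos_of_sum_eq_one hμ.2
  exact pos_of_reflTransGen_of_vecMul_eq hP.1 hμ.1 hμP ha
    ((accessible_iff_transGen hP.1).1
      (hsrc.2 a x (recurrent_of_pos hP hμ.1 hμP ha) hx)).to_reflTransGen

theorem eq_zero_of_vecMul_eq (hP : IsStochastic P) (hsrc : SingleRecurrentClass P)
    (hμ : ∀ a, 0 ≤ μ a) (hμP : μ ᵥ* P = μ) {r : S} (hr : Recurrent P r) (hμr : μ r = 0) :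
    μ = 0 := by
  funext x
  by_contra hx
  have hpos : 0 < μ x := lt_of_le_of_ne (hμ x) (Ne.symm hx)
  have hxr := (accessible_iff_transGen hP.1).1 (hsrc.2 x r (recurrent_of_pos hP hμ hμP hpos) hr)
  exact (pos_of_reflTransGen_of_vecMul_eq hP.1 hμ hμP hpos hxr.to_reflTransGen).ne' hμr

theorem eq_of_vecMul_eq (hP : IsStochastic P) (hsrc : SingleRecurrentClass P) {ν : S → ℝ}
    (hμ : IsProbDist μ) (hμP : μ ᵥ* P = μ) (hν : IsProbDist ν) (hνP : ν ᵥ* P = ν) : μ = ν := by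
  classical
  obtain ⟨r, hr, hmin⟩ := Finset.exists_min_image (univ.filter (Recurrent P)) (fun x => μ x / ν x)
    (hsrc.1.imp fun a ha => mem_filter.2 ⟨mem_univ a, ha⟩)
  rw [mem_filter] at hr
  set c := μ r / ν r
  have hνr : 0 < ν r := pos_of_recurrent hP hsrc hν hνP hr.2
  -- `c` is the largest multiple of `ν` lying below `μ`
  have hle : ∀ x, c * ν x ≤ μ x := by
    intro x
    by_cases hx : Recurrent P x
    · rw [← le_div_iff₀ (pos_of_recurrent hP hsrc hν hνP hx)]
      exact hmin x (mem_filter.2 ⟨mem_univ x, hx⟩)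
    · have hνx : ν x = 0 :=
        le_antisymm (not_lt.1 fun h => hx (recurrent_of_pos hP hν.1 hνP h)) (hν.1 x)
      rw [hνx, mul_zero]
      exact hμ.1 x
  have hzero : μ - c • ν = 0 := by
    refine eq_zero_of_vecMul_eq hP hsrc (fun x => by simpa using hle x) ?_ hr.2 ?_
    · rw [Matrix.sub_vecMul, Matrix.smul_vecMul, hμP, hνP]
    · simp [c, div_mul_cancel₀ _ hνr.ne']
  have hμc : μ = c • ν := sub_eq_zero.1 hzero
  have hc : c = 1 := by
    have := hμ.2
    simp_rw [hμc, Pi.smul_apply, smul_eq_mul, ← Finset.mul_sum, hν.2, mul_one] at this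
    exact this
  rw [hμc, hc, one_smul]

theorem singleRecurrentClass_of_reachable (hP : IsStochastic P) (A : S → Prop) (hA : ∃ a, A a)
    (hcomm : ∀ a b, A a → A b → Relation.ReflTransGen (0 < P · ·) a b)
    (hreach : ∀ s, ∃ a, A a ∧ Relation.ReflTransGen (0 < P · ·) s a) :
    SingleRecurrentClass P := by
  have hrecA : ∀ a, A a → Recurrent P a := fun a ha => (recurrent_iff hP.1).2 fun j haj => by
    obtain ⟨b, hb, hjb⟩ := hreach j
    have hja := hjb.trans (hcomm b a hb ha)
    exact (Relation.TransGen.trans_right hja haj).trans_left hja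
  refine ⟨hA.imp hrecA, fun i j hi hj => (accessible_iff_transGen hP.1).2 ?_⟩
  obtain ⟨a, ha, hia⟩ := hreach i
  obtain ⟨b, hb, hjb⟩ := hreach j
  have hbj := (recurrent_iff hP.1).1 hj b (hj.transGen_of_reflTransGen hP hjb)
  exact hi.transGen_of_reflTransGen hP (hia.trans ((hcomm a b ha hb).trans hbj.to_reflTransGen))

end MarkovChain

section Tuples

variable {Z : Type*} {n : ℕ}

theorem sum_tuple_cons [Fintype Z] (f : (Fin (n + 1) → Z) → ℝ) :
    ∑ v, f v = ∑ z, ∑ t, f (Fin.cons z t) := by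
  rw [← (Fin.consEquiv fun _ => Z).sum_comp, Fintype.sum_prod_type]
  rfl

theorem sum_tuple_snoc [Fintype Z] (f : (Fin (n + 1) → Z) → ℝ) :
    ∑ v, f v = ∑ t, ∑ z, f (Fin.snoc t z) := by
  rw [← (Fin.snocEquiv fun _ => Z).sum_comp, Fintype.sum_prod_type, Finset.sum_comm]
  rfl

theorem front_snoc (t : Fin n → Z) (z : Z) : front (Fin.snoc t z : Fin (n + 1) → Z) = t := by
  funext i
  simp [front]

theorem back_cons (z : Z) (t : Fin n → Z) : back (Fin.cons z t : Fin (n + 1) → Z) = t := by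
  funext i
  simp [back]

theorem init_cons (z : Z) (t : Fin (n + 1) → Z) :
    Fin.init (Fin.cons z t : Fin (n + 2) → Z) = Fin.cons z (Fin.init t) := by
  funext i
  refine Fin.cases rfl (fun j => ?_) i
  simp only [Fin.init, Fin.cons_succ]
  exact Fin.cons_succ (α := fun _ => Z) z t j.castSucc

theorem front_cons (z : Z) (t : Fin (n + 1) → Z) :
    front (Fin.cons z t : Fin (n + 2) → Z) = Fin.cons z (front t) :=
  init_cons z t

def extendTuple (v : Fin n → Z) (d : Z) : ℕ → Z := fun t => if h : t < n then v ⟨t, h⟩ else d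

theorem extendTuple_of_lt (v : Fin n → Z) (d : Z) {t : ℕ} (h : t < n) :
    extendTuple v d t = v ⟨t, h⟩ :=
  dif_pos h

end Tuples

section Windows

variable {Z : Type*} {k : ℕ}

def window (k : ℕ) (x : ℕ → Z) (t : ℕ) : Fin k → Z := fun i => x (t + i)

def Admissible (Q : (Fin k → Z) → Z → ℝ) (x : ℕ → Z) (n : ℕ) : Prop :=
  ∀ t < n, 0 < Q (window k x t) (x (t + k))

def splice (x : ℕ → Z) (T : ℕ) (y : ℕ → Z) : ℕ → Z := fun t => if t < T then x t else y (t - T)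

theorem window_shift (x : ℕ → Z) (s t : ℕ) :
    window k (fun u => x (s + u)) t = window k x (s + t) := by
  funext i
  simp only [window, add_assoc]

@[simp]
theorem window_zero (x : ℕ → Z) : window k x 0 = fun i : Fin k => x i := by
  funext i
  simp only [window, zero_add]

theorem snoc_window (x : ℕ → Z) (t : ℕ) :
    Fin.snoc (window k x t) (x (t + k)) = window (k + 1) x t := by
  funext i
  rcases Fin.eq_castSucc_or_eq_last i with ⟨j, rfl⟩ | rfl <;> simp [window]

theorem window_congr {x y : ℕ → Z} {t : ℕ} (h : ∀ i < k, x (t + i) = y (t + i)) :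
    window k x t = window k y t :=
  funext fun i => h i i.isLt

variable {Q : (Fin k → Z) → Z → ℝ} {x : ℕ → Z} {n : ℕ}

theorem Admissible.mono (hx : Admissible Q x n) {m : ℕ} (hm : m ≤ n) : Admissible Q x m :=
  fun t ht => hx t (by omega)

theorem Admissible.shift {s : ℕ} (hx : Admissible Q x (s + n)) :
    Admissible Q (fun u => x (s + u)) n := fun t ht => by
  show 0 < Q _ (x (s + (t + k)))
  rw [window_shift, ← add_assoc]
  exact hx (s + t) (by omega)

theorem splice_of_lt_add {T : ℕ} {y : ℕ → Z} (hxy : window k x T = window k y 0) {t : ℕ}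
    (ht : t < T + k) : splice x T y t = x t := by
  unfold splice
  split_ifs with h
  · rfl
  · have := congrFun hxy ⟨t - T, by omega⟩
    simp only [window, zero_add] at this
    rw [← this, Nat.add_sub_cancel' (by omega)]

theorem splice_add (T : ℕ) (y : ℕ → Z) (t : ℕ) : splice x T y (T + t) = y t := by
  simp [splice]

theorem Admissible.splice {T : ℕ} {y : ℕ → Z} (hx : Admissible Q x T) (hy : Admissible Q y n)
    (hxy : window k x T = window k y 0) : Admissible Q (splice x T y) (T + n) := by
  intro t ht
  by_cases htT : t < T
  · rw [window_congr fun i hi => splice_of_lt_add hxy (by omega),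
      splice_of_lt_add hxy (by omega)]
    exact hx t htT
  · obtain ⟨s, rfl⟩ : ∃ s, t = T + s := ⟨t - T, by omega⟩
    simp only [← window_shift, add_assoc, splice_add]
    exact hy s (by omega)

end Windows

section DoobLift

variable {Z : Type*} {k : ℕ} {Q : (Fin (k + 1) → Z) → Z → ℝ} (hk : 0 < k + 1)

theorem doobLift_apply (w w' : Fin (k + 1) → Z) :
    doobLift Q hk w w' = if back w = front w' then Q w (w' (Fin.last k)) else 0 := by
  have hshift : (∀ (i : Fin (k + 1)) (h : (i : ℕ) + 1 < k + 1), w' i = w ⟨i + 1, h⟩) ↔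
      back w = front w' := by
    refine ⟨fun h => funext fun i => (h i.castSucc (by simp)).symm, fun h i hi => ?_⟩
    exact (congrFun h ⟨i, by omega⟩).symm
  simp only [doobLift, Matrix.of_apply, hshift]
  rfl

theorem isStochastic_doobLift [Fintype Z] (hQ : IsTransMat Q) : IsStochastic (doobLift Q hk) := by
  refine ⟨fun w w' => ?_, fun w => ?_⟩
  · rw [doobLift_apply]
    split_ifs
    exacts [hQ.1 _ _, le_rfl]
  · rw [sum_tuple_snoc]
    simp [doobLift_apply, front_snoc, hQ.2]

theorem vecMul_doobLift [Fintype Z] (μ : (Fin (k + 1) → Z) → ℝ) (w : Fin (k + 1) → Z) :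
    (μ ᵥ* doobLift Q hk) w = ∑ z, μ (front (Fin.cons z w)) *
      Q (front (Fin.cons z w)) ((Fin.cons z w : Fin (k + 2) → Z) (Fin.last (k + 1))) := by
  rw [Matrix.vecMul, dotProduct, sum_tuple_cons]
  simp [doobLift_apply, back_cons, front_cons, Fin.cons_last]

theorem isInvariantFor_iff [Fintype Z] {μ : (Fin (k + 1) → Z) → ℝ} :
    IsInvariantFor μ Q ↔ IsProbDist μ ∧ μ ᵥ* doobLift Q hk = μ := by
  simp only [IsInvariantFor, funext_iff, vecMul_doobLift, eq_comm]

theorem doobLift_window (x : ℕ → Z) (t : ℕ) :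
    doobLift Q hk (window (k + 1) x t) (window (k + 1) x (t + 1)) =
      Q (window (k + 1) x t) (x (t + (k + 1))) := by
  rw [doobLift_apply, if_pos]
  · simp [window, add_assoc, add_comm 1 k]
  · funext i
    simp [back, front, window, add_assoc, add_comm 1]

theorem Admissible.reflTransGen {x : ℕ → Z} {n : ℕ} (hx : Admissible Q x n) :
    Relation.ReflTransGen (0 < doobLift Q hk · ·) (window (k + 1) x 0) (window (k + 1) x n) := by
  induction n with
  | zero => rfl
  | succ n ih =>
    refine (ih (hx.mono n.le_succ)).tail ?_
    rw [doobLift_window]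
    exact hx n n.lt_succ_self

theorem Admissible.exists_extension {x : ℕ → Z} {T : ℕ} (hx : Admissible Q x T)
    {b : Fin (k + 1) → Z}
    (hb : Relation.ReflTransGen (0 < doobLift Q hk · ·) (window (k + 1) x T) b) :
    ∃ y T', T ≤ T' ∧ (∀ t < T + (k + 1), y t = x t) ∧ window (k + 1) y T' = b ∧
      Admissible Q y T' := by
  induction hb with
  | refl => exact ⟨x, T, le_rfl, fun _ _ => rfl, rfl, hx⟩
  | @tail c d _ hcd ih =>
    obtain ⟨y, T', hT, hyx, hyc, hy⟩ := ih
    rw [doobLift_apply] at hcd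
    split_ifs at hcd with hshift
    swap
    · exact absurd hcd (lt_irrefl 0)
    set y' := Function.update y (T' + (k + 1)) (d (Fin.last k))
    have hy'y : ∀ t < T' + (k + 1), y' t = y t := fun t ht =>
      Function.update_of_ne (by omega) _ _
    have hy'c : window (k + 1) y' T' = c :=
      (window_congr fun i hi => hy'y _ (by omega)).trans hyc
    refine ⟨y', T' + 1, by omega, fun t ht => (hy'y t (by omega)).trans (hyx t ht), ?_,
      fun t ht => ?_⟩
    · funext i
      rcases Fin.eq_castSucc_or_eq_last i with ⟨j, rfl⟩ | rfl
      · have hj := congrFun hshift j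
        have hc := congrFun hyc j.succ
        simp only [back, front, window, Fin.val_succ, Fin.val_castSucc] at hj hc ⊢
        rw [← hj, ← hc, hy'y _ (by omega), add_assoc, add_comm 1]
      · simp [window, y', add_assoc, add_comm 1 k]
    · rcases Nat.lt_succ_iff_lt_or_eq.1 ht with ht | rfl
      · rw [window_congr fun i hi => hy'y _ (by omega), hy'y _ (by omega)]
        exact hy t ht
      · rw [hy'c]
        simpa [y'] using hcd

/-- Feed in the letters of a state of `A` one by one and stop on first entering `A`. -/
theorem exists_reflTransGen_of_pos_off (A : (Fin (k + 1) → Z) → Prop)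
    (hQ : ∀ w z, ¬ A w → 0 < Q w z) {a : Fin (k + 1) → Z} (ha : A a) (w : Fin (k + 1) → Z) :
    ∃ w', A w' ∧ Relation.ReflTransGen (0 < doobLift Q hk · ·) w w' := by
  classical
  set σ := extendTuple (Fin.append w a) (w 0)
  have hσw : window (k + 1) σ 0 = w := funext fun i => by
    simp only [σ, window, zero_add, extendTuple_of_lt _ _ (by omega : (i : ℕ) < k + 1 + (k + 1))]
    exact Fin.append_left w a i
  have hσa : window (k + 1) σ (k + 1) = a := funext fun i => by
    simp only [σ, window, extendTuple_of_lt _ _ (by omega : k + 1 + (i : ℕ) < k + 1 + (k + 1))]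
    exact Fin.append_right w a i
  have hex : ∃ τ, A (window (k + 1) σ τ) := ⟨k + 1, hσa ▸ ha⟩
  refine ⟨_, Nat.find_spec hex, hσw ▸ Admissible.reflTransGen hk fun t ht => ?_⟩
  exact hQ _ _ (Nat.find_min hex ht)

end DoobLift

section PathWeight

variable {X : Type*} {k : ℕ} (P : (Fin (k + 1) → X) → X → ℝ) (π : (Fin (k + 1) → X) → ℝ)

/-- The law `q_m` of the first `m = k + 1 + n` letters of the chain. -/
def pathWeight : (n : ℕ) → (Fin (k + 1 + n) → X) → ℝ
  | 0, v => π v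
  | n + 1, v =>
    pathWeight n (Fin.init v) * P (fun i => v ⟨n + i, by have := i.isLt; omega⟩) (v (Fin.last _))

variable {P π}

theorem pathWeight_nonneg (hP : ∀ w z, 0 ≤ P w z) (hπ : ∀ w, 0 ≤ π w) :
    ∀ n v, 0 ≤ pathWeight P π n v
  | 0, v => hπ v
  | n + 1, _ => mul_nonneg (pathWeight_nonneg hP hπ n _) (hP _ _)

theorem pathWeight_pos_iff (hP : ∀ w z, 0 ≤ P w z) (hπ : ∀ w, 0 ≤ π w) (x : ℕ → X) (n : ℕ) :
    0 < pathWeight P π n (fun i => x i) ↔ 0 < π (window (k + 1) x 0) ∧ Admissible P x n := by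
  induction n with
  | zero => simp [pathWeight, Admissible]
  | succ n ih =>
    rw [pathWeight, mul_pos_iff_of_nonneg (pathWeight_nonneg hP hπ _ _) (hP _ _)]
    change 0 < pathWeight P π n (fun i => x i) ∧ _ ↔ _
    rw [ih]
    simp only [Admissible, Nat.lt_succ_iff_lt_or_eq, or_imp, forall_and, forall_eq, and_assoc]
    simp only [Fin.val_last, Nat.add_eq, add_comm (k + 1) n]
    rfl

theorem pathWeight_eq_prod : ∀ (n : ℕ) (v : Fin (k + 1 + n) → X),
    pathWeight P π n v = π (fun i => v ⟨i, by omega⟩) *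
      ∏ j : Fin n, P (fun i => v ⟨j + i, by omega⟩) (v ⟨k + 1 + j, by omega⟩)
  | 0, v => by simp [pathWeight]
  | n + 1, v => by
    rw [pathWeight, pathWeight_eq_prod n, Fin.prod_univ_castSucc, mul_assoc]
    rfl

variable [Fintype X]

theorem sum_pathWeight_snoc (hP : ∀ w, ∑ z, P w z = 1) (n : ℕ) (v : Fin (k + 1 + n) → X) :
    ∑ z, pathWeight P π (n + 1) (Fin.snoc v z) = pathWeight P π n v := by
  have hwin : ∀ z, (fun i : Fin (k + 1) => (Fin.snoc v z : Fin (k + 1 + n + 1) → X)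
      ⟨n + i, by have := i.isLt; omega⟩) = fun i : Fin (k + 1) => v ⟨n + i, by omega⟩ := by
    intro z
    funext i
    exact Fin.snoc_castSucc (α := fun _ => X) z v ⟨n + i, _⟩
  simp [pathWeight, Fin.init_snoc, Fin.snoc_last, hwin, ← Finset.mul_sum, hP]

theorem sum_pathWeight_cons (hk : 0 < k + 1) (hπP : π ᵥ* doobLift P hk = π) :
    ∀ (n : ℕ) (v : Fin (k + 1 + n) → X),
      ∑ z, pathWeight P π (n + 1) (Fin.cons z v) = pathWeight P π n v
  | 0, v => by
    conv_rhs => rw [pathWeight, ← hπP, vecMul_doobLift]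
    simp only [pathWeight, zero_add, Fin.cons_last]
    rfl
  | n + 1, v => by
    have hwin : ∀ z, (fun i : Fin (k + 1) => (Fin.cons z v : Fin (k + 1 + (n + 1) + 1) → X)
        ⟨n + 1 + i, by omega⟩) = fun i : Fin (k + 1) => v ⟨n + i, by omega⟩ := fun z =>
      funext fun i => by
        rw [show (⟨n + 1 + i, _⟩ : Fin (k + 1 + (n + 1) + 1)) = Fin.succ ⟨n + i, by omega⟩ from
          Fin.ext (by simp only [Fin.val_succ]; ring), Fin.cons_succ]
    have hstep : ∀ z, pathWeight P π (n + 2) (Fin.cons z v) =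
        pathWeight P π (n + 1) (Fin.cons z (Fin.init v)) *
          P (fun i => v ⟨n + i, by omega⟩) (v (Fin.last _)) := fun z => by
      rw [pathWeight, init_cons, hwin z]
      exact congrArg (_ * P _ ·) (Fin.cons_last (α := fun _ => X) z v)
    rw [Finset.sum_congr rfl fun z _ => hstep z, ← Finset.sum_mul, sum_pathWeight_cons hk hπP n]
    rfl

theorem sum_pathWeight (hP : ∀ w, ∑ z, P w z = 1) (hπ : ∑ w, π w = 1) :
    ∀ n, ∑ v, pathWeight P π n v = 1
  | 0 => hπ
  | n + 1 => by
    refine (sum_tuple_snoc (n := k + 1 + n) _).trans ?_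
    simp only [sum_pathWeight_snoc hP]
    exact sum_pathWeight hP hπ n

theorem sum_pathWeight_mul_shift (hk : 0 < k + 1) (hP : ∀ w, ∑ z, P w z = 1)
    (hπP : π ᵥ* doobLift P hk = π) (n : ℕ) {a : ℕ} (ha : a < k + 1 + n) (f : (Fin a → X) → ℝ) :
    ∑ v, pathWeight P π n v * f (fun i => v ⟨i + 1, by omega⟩) =
      ∑ v, pathWeight P π n v * f (fun i => v ⟨i, by omega⟩) := by
  have hsnoc : ∑ v, pathWeight P π (n + 1) v * f (fun i => v ⟨i + 1, by omega⟩) =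
      ∑ v, pathWeight P π n v * f (fun i => v ⟨i + 1, by omega⟩) := by
    refine (sum_tuple_snoc (n := k + 1 + n) _).trans (Finset.sum_congr rfl fun t _ => ?_)
    have hf : ∀ z, (fun i : Fin a => (Fin.snoc t z : Fin (k + 1 + n + 1) → X) ⟨i + 1, by omega⟩) =
        fun i : Fin a => t ⟨i + 1, by omega⟩ := fun z =>
      funext fun i => Fin.snoc_castSucc (α := fun _ => X) z t ⟨i + 1, by omega⟩
    simp only [hf, ← Finset.sum_mul, sum_pathWeight_snoc hP]
  have hcons : ∑ v, pathWeight P π (n + 1) v * f (fun i => v ⟨i + 1, by omega⟩) =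
      ∑ v, pathWeight P π n v * f (fun i => v ⟨i, by omega⟩) := by
    refine (sum_tuple_cons (n := k + 1 + n) _).trans ?_
    rw [Finset.sum_comm]
    refine Finset.sum_congr rfl fun t _ => ?_
    have hf : ∀ z, (fun i : Fin a => (Fin.cons z t : Fin (k + 1 + n + 1) → X) ⟨i + 1, by omega⟩) =
        fun i : Fin a => t ⟨i, by omega⟩ := fun z =>
      funext fun i => Fin.cons_succ (α := fun _ => X) z t ⟨i, by omega⟩
    simp only [hf, ← Finset.sum_mul, sum_pathWeight_cons hk hπP]
  rw [← hsnoc, hcons]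

/-- The windows of both paths carry stationary mass, hence are recurrent, hence communicate. -/
theorem exists_admissible_join (hk : 0 < k + 1) (hP : IsTransMat P)
    (hrec : SingleRecurrentClass (doobLift P hk)) (hπ : IsProbDist π)
    (hπP : π ᵥ* doobLift P hk = π) {n : ℕ} {x y : ℕ → X} (hx0 : 0 < π (window (k + 1) x 0))
    (hx : Admissible P x n) (hy0 : 0 < π (window (k + 1) y 0)) (hy : Admissible P y n) :
    ∃ z T, 0 < π (window (k + 1) z 0) ∧ Admissible P z (T + n) ∧
      (∀ t < k + 1 + n, z t = x t) ∧ ∀ t, z (T + t) = y t := by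
  have hD := isStochastic_doobLift hk hP
  have hxn : 0 < π (window (k + 1) x n) :=
    pos_of_reflTransGen_of_vecMul_eq hD.1 hπ.1 hπP hx0 (hx.reflTransGen hk)
  have hlink := (accessible_iff_transGen hD.1).1
    (hrec.2 _ _ (recurrent_of_pos hD hπ.1 hπP hxn) (recurrent_of_pos hD hπ.1 hπP hy0))
  obtain ⟨x', T, hnT, hx'x, hx'y, hx'⟩ := hx.exists_extension hk hlink.to_reflTransGen
  have hzx : ∀ t < k + 1 + n, splice x' T y t = x t := fun t ht =>
    (splice_of_lt_add hx'y (by omega)).trans (hx'x t (by omega))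
  refine ⟨splice x' T y, T, ?_, hx'.splice hy hx'y, hzx, splice_add T y⟩
  rwa [window_congr fun i hi => hzx (0 + i) (by omega)]

end PathWeight

section MarkovApproximation

variable {Y : Type*} [Fintype Y] {k : ℕ}

def marginal (r : (Fin (k + 1) → Y) → ℝ) (w : Fin k → Y) : ℝ := ∑ z, r (Fin.snoc w z)

def markovApprox (r : (Fin (k + 1) → Y) → ℝ) (w : Fin k → Y) (z : Y) : ℝ :=
  if 0 < marginal r w then r (Fin.snoc w z) / marginal r w else 1 / (Fintype.card Y : ℝ)

variable {r : (Fin (k + 1) → Y) → ℝ}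

theorem marginal_nonneg (hr : ∀ u, 0 ≤ r u) (w : Fin k → Y) : 0 ≤ marginal r w :=
  Finset.sum_nonneg fun _ _ => hr _

theorem marginal_pos_of_pos (hr : ∀ u, 0 ≤ r u) {w : Fin k → Y} {z : Y}
    (hwz : 0 < r (Fin.snoc w z)) : 0 < marginal r w :=
  hwz.trans_le (Finset.single_le_sum (fun z _ => hr (Fin.snoc w z)) (mem_univ z))

theorem sum_marginal : ∑ w, marginal r w = ∑ u, r u :=
  (sum_tuple_snoc r).symm

theorem isTransMat_markovApprox [Nonempty Y] (hr : ∀ u, 0 ≤ r u) :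
    IsTransMat (markovApprox r) := by
  refine ⟨fun w z => ?_, fun w => ?_⟩
  · unfold markovApprox
    split_ifs
    exacts [div_nonneg (hr _) (marginal_nonneg hr w), by positivity]
  · simp only [markovApprox]
    split_ifs with hw
    · exact (Finset.sum_div ..).symm.trans (div_self hw.ne')
    · simp

theorem markovApprox_pos_of_pos (hr : ∀ u, 0 ≤ r u) {w : Fin k → Y} {z : Y}
    (hwz : 0 < r (Fin.snoc w z)) : 0 < markovApprox r w z := by
  have hw := marginal_pos_of_pos hr hwz
  rw [markovApprox, if_pos hw]
  exact div_pos hwz hw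

theorem markovApprox_pos_of_not_pos [Nonempty Y] {w : Fin k → Y} (hw : ¬ 0 < marginal r w)
    (z : Y) : 0 < markovApprox r w z := by
  rw [markovApprox, if_neg hw]
  positivity

theorem isInvariantFor_marginal (hr : ∀ u, 0 ≤ r u)
    (hstat : ∀ w, ∑ z, r (Fin.cons z w) = marginal r w) (hr1 : ∑ u, r u = 1) :
    IsInvariantFor (marginal r) (markovApprox r) := by
  have hmul : ∀ u, marginal r (front u) * markovApprox r (front u) (u (Fin.last _)) = r u := by
    intro u
    have hu : Fin.snoc (front u) (u (Fin.last _)) = u := Fin.snoc_init_self u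
    by_cases hpos : 0 < marginal r (front u)
    · rw [markovApprox, if_pos hpos, hu, mul_div_cancel₀ _ hpos.ne']
    · have h0 : r u = 0 :=
        le_antisymm (not_lt.1 fun h => hpos (marginal_pos_of_pos hr (hu ▸ h))) (hr u)
      rw [h0, le_antisymm (not_lt.1 hpos) (marginal_nonneg hr _), zero_mul]
  refine ⟨⟨marginal_nonneg hr, sum_marginal.trans hr1⟩, fun w => ?_⟩
  simp only [hmul, hstat]

theorem existsUnique_isInvariantFor_markovApprox {r : (Fin (k + 1 + 1) → Y) → ℝ}
    (hr : ∀ u, 0 ≤ r u) (hstat : ∀ w, ∑ z, r (Fin.cons z w) = marginal r w) (hr1 : ∑ u, r u = 1)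
    (hcomm : ∀ u w, 0 < marginal r u → 0 < marginal r w →
      Relation.ReflTransGen (0 < doobLift (markovApprox r) (Nat.succ_pos k) · ·) u w) :
    ∃! μ, IsInvariantFor μ (markovApprox r) := by
  obtain ⟨a, ha⟩ := exists_pos_of_sum_eq_one (sum_marginal.trans hr1)
  have : Nonempty Y := ⟨a 0⟩
  have hD := isStochastic_doobLift (Nat.succ_pos k) (isTransMat_markovApprox hr)
  have hsrc := singleRecurrentClass_of_reachable hD (0 < marginal r ·) ⟨a, ha⟩ hcomm
    (exists_reflTransGen_of_pos_off _ _ (fun w z hw => markovApprox_pos_of_not_pos hw z) ha)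
  have hinv := isInvariantFor_marginal hr hstat hr1
  refine ⟨marginal r, hinv, fun μ hμ => ?_⟩
  rw [isInvariantFor_iff (Nat.succ_pos k)] at hinv hμ
  exact eq_of_vecMul_eq hD hsrc hμ.1 hμ.2 hinv.1 hinv.2

end MarkovApproximation

section Lumping

variable {X Y : Type*} [Fintype X] (g : X → Y) {N : ℕ}

def lumpedLaw (ρ : (Fin N → X) → ℝ) {a : ℕ} (h : a ≤ N) (u : Fin a → Y) : ℝ :=
  ∑ v, if ∀ i : Fin a, g (v ⟨i, by omega⟩) = u i then ρ v else 0

variable {g} {k : ℕ} {ρ : (Fin N → X) → ℝ}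

theorem lumpedLaw_nonneg (hρ : ∀ v, 0 ≤ ρ v) {a : ℕ} (h : a ≤ N) (u : Fin a → Y) :
    0 ≤ lumpedLaw g ρ h u :=
  Finset.sum_nonneg fun v _ => by
    split_ifs
    exacts [hρ v, le_rfl]

theorem sum_lumpedLaw [Fintype Y] {a : ℕ} (h : a ≤ N) : ∑ u, lumpedLaw g ρ h u = ∑ v, ρ v := by
  unfold lumpedLaw
  rw [Finset.sum_comm]
  refine Finset.sum_congr rfl fun v _ => ?_
  simp [← funext_iff, eq_comm]

theorem sum_lumpedLaw_cons [Fintype Y] (h : k + 1 ≤ N) (w : Fin k → Y) :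
    ∑ z, lumpedLaw g ρ h (Fin.cons z w) =
      ∑ v, ρ v * if ∀ i : Fin k, g (v ⟨i + 1, by omega⟩) = w i then 1 else 0 := by
  unfold lumpedLaw
  rw [Finset.sum_comm]
  refine Finset.sum_congr rfl fun v _ => ?_
  simp [Fin.forall_fin_succ, ite_and, eq_comm]

theorem marginal_lumpedLaw [Fintype Y] (h : k + 1 ≤ N) (w : Fin k → Y) :
    marginal (lumpedLaw g ρ h) w =
      ∑ v, ρ v * if ∀ i : Fin k, g (v ⟨i, by omega⟩) = w i then 1 else 0 := by
  unfold marginal lumpedLaw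
  rw [Finset.sum_comm]
  refine Finset.sum_congr rfl fun v _ => ?_
  simp [Fin.forall_fin_succ', ite_and, eq_comm]

variable {ℓ n : ℕ} {P : (Fin (ℓ + 1) → X) → X → ℝ} {π : (Fin (ℓ + 1) → X) → ℝ}

theorem lumpedLaw_pathWeight_pos (hP : ∀ w z, 0 ≤ P w z) (hπ : ∀ w, 0 ≤ π w) {a : ℕ}
    (h : a ≤ ℓ + 1 + n) {x : ℕ → X} (hx0 : 0 < π (window (ℓ + 1) x 0)) (hx : Admissible P x n) :
    0 < lumpedLaw g (pathWeight P π n) h (fun i => g (x i)) := by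
  refine lt_of_lt_of_le ?_
    (Finset.single_le_sum (fun v _ => ?_) (mem_univ (fun i : Fin (ℓ + 1 + n) => x i)))
  · split_ifs with hgx
    · exact (pathWeight_pos_iff hP hπ x n).2 ⟨hx0, hx⟩
    · exact absurd (fun i => rfl) hgx
  · split_ifs
    exacts [pathWeight_nonneg hP hπ n v, le_rfl]

theorem exists_admissible_of_marginal_pos [Fintype Y] (hP : ∀ w z, 0 ≤ P w z)
    (hπ : ∀ w, 0 ≤ π w) (h : k + 1 ≤ ℓ + 1 + n) {u : Fin k → Y}
    (hu : 0 < marginal (lumpedLaw g (pathWeight P π n) h) u) :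
    ∃ x : ℕ → X, 0 < π (window (ℓ + 1) x 0) ∧ Admissible P x n ∧ ∀ i : Fin k, g (x i) = u i := by
  obtain ⟨z, -, hz⟩ := exists_pos_of_sum_pos hu
  obtain ⟨v, -, hv⟩ := exists_pos_of_sum_pos hz
  split_ifs at hv with hgv
  swap
  · exact absurd hv (lt_irrefl 0)
  set x := extendTuple v (v ⟨0, by omega⟩) with hx
  have hxv : (fun i : Fin (ℓ + 1 + n) => x i) = v :=
    funext fun i => extendTuple_of_lt _ _ i.isLt
  rw [← hxv, pathWeight_pos_iff hP hπ] at hv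
  refine ⟨x, hv.1, hv.2, fun i => ?_⟩
  rw [hx, extendTuple_of_lt _ _ (by omega)]
  exact (hgv i.castSucc).trans (Fin.snoc_castSucc (α := fun _ => Y) z u i)

theorem reflTransGen_of_marginal_pos [Fintype Y] (hℓ : 0 < ℓ + 1) (hP : IsTransMat P)
    (hrec : SingleRecurrentClass (doobLift P hℓ)) (hπ : IsProbDist π)
    (hπP : π ᵥ* doobLift P hℓ = π) (h : k + 1 + 1 ≤ ℓ + 1 + n) {Q : (Fin (k + 1) → Y) → Y → ℝ}
    (hQ : ∀ w z, 0 < lumpedLaw g (pathWeight P π n) h (Fin.snoc w z) → 0 < Q w z)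
    {u w : Fin (k + 1) → Y} (hu : 0 < marginal (lumpedLaw g (pathWeight P π n) h) u)
    (hw : 0 < marginal (lumpedLaw g (pathWeight P π n) h) w) :
    Relation.ReflTransGen (0 < doobLift Q (Nat.succ_pos k) · ·) u w := by
  have hD := isStochastic_doobLift hℓ hP
  obtain ⟨xu, hxu0, hxu, hgu⟩ := exists_admissible_of_marginal_pos hP.1 hπ.1 h hu
  obtain ⟨xw, hxw0, hxw, hgw⟩ := exists_admissible_of_marginal_pos hP.1 hπ.1 h hw
  obtain ⟨z, T, hz0, hz, hzu, hzw⟩ := exists_admissible_join hℓ hP hrec hπ hπP hxu0 hxu hxw0 hxw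
  have hgz : Admissible Q (fun t => g (z t)) T := fun t ht => by
    apply hQ
    rw [snoc_window]
    refine lumpedLaw_pathWeight_pos hP.1 hπ.1 h (x := fun s => z (t + s)) ?_
      (hz.mono (by omega : t + n ≤ T + n)).shift
    rw [window_shift, add_zero]
    exact pos_of_reflTransGen_of_vecMul_eq hD.1 hπ.1 hπP hz0
      ((hz.mono (by omega)).reflTransGen hℓ)
  convert hgz.reflTransGen (Nat.succ_pos k) using 1
  · funext i
    simp [window, hzu i (by omega), hgu]
  · funext i
    simp [window, hzw, hgw]

end Lumping

/-- Let `X` be an `ℓ`-th order Markov chain whose Doob lift has a single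
recurrent class, started in an invariant distribution `π` on `X^ℓ`. If `Q` is the `k`-th
order Markov approximation of the lumped process `g(X)`, then `Q` has a unique invariant
distribution on `Y^k`. -/
theorem unique_invariant_of_lumping_higher_order
    {X Y : Type*} [Fintype X] [Fintype Y]
    (ℓ : ℕ) (hℓ : 1 ≤ ℓ)
    (P : (Fin ℓ → X) → X → ℝ) (hP : IsTransMat P)
    (hrec : SingleRecurrentClass (doobLift P hℓ))
    (π : (Fin ℓ → X) → ℝ) (hπ : IsProbDist π)
    (hπinv : ∀ w' : Fin ℓ → X, ∑ w : Fin ℓ → X, π w * doobLift P hℓ w w' = π w')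
    (g : X → Y)
    (k : ℕ) (hk : 1 ≤ k)
    (m : ℕ) (hm : m = max (k + 1) ℓ)
    (q : (Fin m → X) → ℝ)
    (hq : ∀ v : Fin m → X,
      q v = π (fun i : Fin ℓ => v ⟨(i : ℕ), by have := i.isLt; omega⟩) *
        ∏ j : Fin (m - ℓ),
          P (fun i : Fin ℓ => v ⟨(j : ℕ) + (i : ℕ), by have := j.isLt; have := i.isLt; omega⟩)
            (v ⟨ℓ + (j : ℕ), by have := j.isLt; omega⟩))
    (r : (Fin (k + 1) → Y) → ℝ)
    (hr : ∀ u : Fin (k + 1) → Y,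
      r u = ∑ v : Fin m → X,
        if ∀ i : Fin (k + 1), g (v ⟨(i : ℕ), by have := i.isLt; omega⟩) = u i then q v else 0)
    (rk : (Fin k → Y) → ℝ) (hrk : ∀ w, rk w = ∑ z, r (Fin.snoc w z))
    (Q : (Fin k → Y) → Y → ℝ)
    (hQ : ∀ (w : Fin k → Y) (z : Y), Q w z =
      if 0 < rk w then r (Fin.snoc w z) / rk w else 1 / (Fintype.card Y : ℝ)) :
    ∃! μ : (Fin k → Y) → ℝ, IsInvariantFor μ Q := by
  obtain ⟨L, rfl⟩ : ∃ L, ℓ = L + 1 := ⟨ℓ - 1, by omega⟩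
  obtain ⟨κ, rfl⟩ : ∃ κ, k = κ + 1 := ⟨k - 1, by omega⟩
  obtain ⟨n, rfl⟩ : ∃ n, m = L + 1 + n := ⟨m - (L + 1), by omega⟩
  obtain rfl : q = pathWeight P π n := funext fun v => by
    rw [hq, pathWeight_eq_prod]
    congr 1
    exact Fintype.prod_equiv (finCongr (by omega)) _ _ fun j => rfl
  have hkn : κ + 1 + 1 ≤ L + 1 + n := by omega
  obtain rfl : r = lumpedLaw g (pathWeight P π n) hkn := funext hr
  obtain rfl : rk = marginal _ := funext hrk
  obtain rfl : Q = markovApprox _ := funext₂ hQ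
  have hπP : π ᵥ* doobLift P hℓ = π := funext hπinv
  have hr0 := lumpedLaw_nonneg (g := g) (pathWeight_nonneg hP.1 hπ.1 n) hkn
  refine existsUnique_isInvariantFor_markovApprox hr0 (fun w => ?_) ?_ fun u w hu hw =>
    reflTransGen_of_marginal_pos hℓ hP hrec hπ hπP hkn (fun _ _ => markovApprox_pos_of_pos hr0)
      hu hw
  · rw [sum_lumpedLaw_cons, marginal_lumpedLaw]
    exact sum_pathWeight_mul_shift hℓ hP.2 hπP n (by omega)
      fun y => if ∀ i, g (y i) = w i then 1 else 0
  · rw [sum_lumpedLaw, sum_pathWeight hP.2 hπ.2]
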